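/- arXiv:1903.05462 — 4 statements merged into one kernel-verified Lean document; each statement's English description precedes it below -/
import Mathlib

section
/- Let Δ ≥ 3, let λ ∈ ℂ with |λ| < (Δ−1)^{Δ−1}/Δ^Δ, and let B be the open disc of radius 1/Δ centered at 0. Then for every d ∈ {1,…,Δ−1} and every z in the closed disc of radius 1/Δ around 0, one has |λ/(1+z)^d| < 1/Δ; that is, each map f_{λ,d}(z) = λ/(1+z)^d maps the closed disc of radius 1/Δ strictly into the open disc B. -/
/-!
Since `‖z‖ ≤ 1/Δ`, the denominator satisfies `‖1 + z‖ ≥ 1 - 1/Δ = (Δ-1)/Δ`, so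
`‖(1 + z)^d‖ ≥ ((Δ-1)/Δ)^d ≥ ((Δ-1)/Δ)^(Δ-1)` for `d ≤ Δ - 1`. The bound on `λ` is exactly
`(1/Δ) · ((Δ-1)/Δ)^(Δ-1)`, hence `‖λ/(1+z)^d‖ < 1/Δ`.
-/

theorem one_sub_le_norm_one_add {R : Type*} [SeminormedRing R] [NormOneClass R] {z : R} {ρ : ℝ}
    (hz : ‖z‖ ≤ ρ) : 1 - ρ ≤ ‖1 + z‖ := by
  have h := norm_sub_norm_le (1 : R) (-z)
  rw [norm_one, norm_neg, sub_neg_eq_add] at h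
  linarith

theorem norm_div_pow_lt_of_le_norm {𝕜 : Type*} [NormedDivisionRing 𝕜] {a w : 𝕜} {c r : ℝ}
    {d n : ℕ} (hr₀ : 0 < r) (hr₁ : r ≤ 1) (hrw : r ≤ ‖w‖) (hdn : d ≤ n)
    (ha : ‖a‖ < c * r ^ n) : ‖a / w ^ d‖ < c := by
  have hc : 0 < c := pos_of_mul_pos_left ((norm_nonneg a).trans_lt ha) (by positivity)
  have hwd : r ^ d ≤ ‖w ^ d‖ := norm_pow w d ▸ pow_le_pow_left₀ hr₀.le hrw d
  have hwd₀ : 0 < ‖w ^ d‖ := (pow_pos hr₀ d).trans_le hwd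
  rw [norm_div, div_lt_iff₀ hwd₀]
  calc ‖a‖ < c * r ^ n := ha
    _ ≤ c * r ^ d := mul_le_mul_of_nonneg_left (pow_le_pow_of_le_one hr₀.le hr₁ hdn) hc.le
    _ ≤ c * ‖w ^ d‖ := by gcongr

theorem sub_one_pow_pred_div_pow {x : ℝ} (hx : x ≠ 0) {n : ℕ} (hn : n ≠ 0) :
    (x - 1) ^ (n - 1) / x ^ n = 1 / x * (1 - 1 / x) ^ (n - 1) := by
  obtain ⟨m, rfl⟩ := Nat.exists_eq_succ_of_ne_zero hn
  rw [Nat.succ_sub_one, one_sub_div hx, div_pow, pow_succ]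
  field_simp

theorem maps_disc_into_disc_general (Δ : ℕ) (hΔ : 3 ≤ Δ) (lam : ℂ)
    (hlam : ‖lam‖ < ((Δ : ℝ) - 1) ^ (Δ - 1) / (Δ : ℝ) ^ Δ)
    (d : ℕ) (hd2 : d ≤ Δ - 1)
    (z : ℂ) (hz : ‖z‖ ≤ 1 / (Δ : ℝ)) :
    ‖lam / (1 + z) ^ d‖ < 1 / (Δ : ℝ) := by
  have hΔ₁ : (1 : ℝ) < Δ := by exact_mod_cast (by omega : 1 < Δ)
  have hinv : 0 < 1 / (Δ : ℝ) ∧ 1 / (Δ : ℝ) < 1 :=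
    ⟨by positivity, (div_lt_one (by positivity)).2 hΔ₁⟩
  rw [sub_one_pow_pred_div_pow (by positivity) (by omega)] at hlam
  exact norm_div_pow_lt_of_le_norm (by linarith) (by linarith)
    (one_sub_le_norm_one_add hz) hd2 hlam

/-- For `|λ| < (Δ−1)^{Δ−1}/Δ^Δ`, each map `f_{λ,d}(z) = λ/(1+z)^d` with `1 ≤ d ≤ Δ−1`
maps the closed disc of radius `1/Δ` around `0` strictly into the open disc of radius `1/Δ`. -/
theorem maps_disc_into_disc (Δ : ℕ) (hΔ : 3 ≤ Δ) (lam : ℂ)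
    (hlam : ‖lam‖ < ((Δ : ℝ) - 1) ^ (Δ - 1) / (Δ : ℝ) ^ Δ)
    (d : ℕ) (hd1 : 1 ≤ d) (hd2 : d ≤ Δ - 1)
    (z : ℂ) (hz : ‖z‖ ≤ 1 / (Δ : ℝ)) :
    ‖lam / (1 + z) ^ d‖ < 1 / (Δ : ℝ) :=
  maps_disc_into_disc_general Δ hΔ lam hlam d hd2 z hz
end

section
/- Let Δ ≥ 3, λ ∈ ℂ∖{0} with |λ| < (Δ−1)^{Δ−1}/Δ^Δ, d ∈ {1,…,Δ−1}, and let z ∈ ℂ with |z+1| < (Δ−1)/Δ. Then for every w ∈ ℂ with w^d = λ/z (a d-th root), one has |w| < (Δ−1)/Δ. Equivalently, every inverse branch h_i^{−1} of h(z) = λ/z^d on the disc of radius (Δ−1)/Δ around −1 satisfies |h_i^{−1}(z)| < (Δ−1)/Δ. -/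
/-!
Since `|z + 1| < r := (Δ−1)/Δ`, the reverse triangle inequality gives `|z| > 1 − r = 1/Δ`, while
the bound on `λ` reads `|λ| < r^{Δ−1} (1 − r)`. Hence `|w|^d = |λ|/|z| < r^{Δ−1} ≤ r^d`, using
`d ≤ Δ − 1` and `r ≤ 1`, so `|w| < r`.
-/

lemma norm_sub_lt_norm_of_norm_add_lt {E : Type*} [SeminormedAddCommGroup E] {a z : E} {r : ℝ}
    (hz : ‖z + a‖ < r) : ‖a‖ - r < ‖z‖ := by
  have h := norm_sub_le (z + a) z
  rw [add_sub_cancel_left] at h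
  linarith

lemma norm_lt_of_pow_eq_div {K : Type*} [NormedDivisionRing K] {lam z w : K} {r : ℝ} {d n : ℕ}
    (hr : r ≤ 1) (hdn : d ≤ n) (hlam : ‖lam‖ < r ^ n * (1 - r)) (hz : ‖z + 1‖ < r)
    (hw : w ^ d = lam / z) : ‖w‖ < r := by
  have hr0 : 0 < r := (norm_nonneg _).trans_lt hz
  have hz_low : 1 - r < ‖z‖ := by simpa using norm_sub_lt_norm_of_norm_add_lt hz
  have hz0 : 0 < ‖z‖ := by linarith
  have hw_pow : ‖w‖ ^ d < r ^ d := calc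
    ‖w‖ ^ d = ‖lam‖ / ‖z‖ := by rw [← norm_pow, hw, norm_div]
    _ < r ^ n := by
      rw [div_lt_iff₀ hz0]
      exact hlam.trans_le (by gcongr)
    _ ≤ r ^ d := pow_le_pow_of_le_one hr0.le hr hdn
  exact lt_of_pow_lt_pow_left₀ d hr0.le hw_pow

lemma sub_one_pow_pred_div_pow_eq {Δ : ℕ} (hΔ : 1 ≤ Δ) :
    ((Δ : ℝ) - 1) ^ (Δ - 1) / (Δ : ℝ) ^ Δ
      = (((Δ : ℝ) - 1) / Δ) ^ (Δ - 1) * (1 - ((Δ : ℝ) - 1) / Δ) := by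
  obtain ⟨k, rfl⟩ := Nat.exists_eq_add_of_le' hΔ
  have hk : ((k + 1 : ℕ) : ℝ) ≠ 0 := by positivity
  rw [Nat.add_sub_cancel, div_pow, pow_succ]
  field_simp
  push_cast
  ring

theorem inverse_branch_bound_general (Δ : ℕ) (hΔ : 3 ≤ Δ) (lam : ℂ)
    (hlam : ‖lam‖ < ((Δ : ℝ) - 1) ^ (Δ - 1) / (Δ : ℝ) ^ Δ)
    (d : ℕ) (hd2 : d ≤ Δ - 1)
    (z w : ℂ) (hz : ‖z + 1‖ < ((Δ : ℝ) - 1) / (Δ : ℝ))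
    (hw : w ^ d = lam / z) :
    ‖w‖ < ((Δ : ℝ) - 1) / (Δ : ℝ) := by
  have hΔ0 : (0 : ℝ) < Δ := by positivity
  have hr : ((Δ : ℝ) - 1) / Δ ≤ 1 := by rw [div_le_one hΔ0]; linarith
  rw [sub_one_pow_pred_div_pow_eq (by omega)] at hlam
  exact norm_lt_of_pow_eq_div hr hd2 hlam hz hw

/-- For `0 < |λ| < (Δ−1)^{Δ−1}/Δ^Δ`, `1 ≤ d ≤ Δ−1` and `z` in the disc of radius `(Δ−1)/Δ`
around `−1`, every `d`-th root `w` of `λ/z` satisfies `|w| < (Δ−1)/Δ`; i.e. every inverse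
branch of `h(z) = λ/z^d` maps this disc into the disc of radius `(Δ−1)/Δ` around `0`. -/
theorem inverse_branch_bound (Δ : ℕ) (hΔ : 3 ≤ Δ) (lam : ℂ) (hlam0 : lam ≠ 0)
    (hlam : ‖lam‖ < ((Δ : ℝ) - 1) ^ (Δ - 1) / (Δ : ℝ) ^ Δ)
    (d : ℕ) (hd1 : 1 ≤ d) (hd2 : d ≤ Δ - 1)
    (z w : ℂ) (hz : ‖z + 1‖ < ((Δ : ℝ) - 1) / (Δ : ℝ))
    (hw : w ^ d = lam / z) :
    ‖w‖ < ((Δ : ℝ) - 1) / (Δ : ℝ) :=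
  inverse_branch_bound_general Δ hΔ lam hlam d hd2 z w hz hw
end

section
/- Let f be a holomorphic family of rational maps parameterized by a domain Ω ⊆ ℂ, given by f_λ(z) = p(λ,z)/q(λ,z) with p, q ∈ ℂ[λ,z] coprime in ℂ(λ)[z]. Suppose for some λ₀ ∈ Ω there is a neighborhood U of λ₀ and a holomorphic map w : U → ℂ with f_λ(w(λ)) = w(λ) and |f_λ'(w(λ))| = 1 for all λ ∈ U. Then for all but finitely many λ ∈ ℂ, the rational map p(λ,·)/q(λ,·) has an indifferent fixed point (a fixed point with multiplier of absolute value exactly 1). -/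
/-!
Write `L = p - z q` and `M = W(q, p) - α q²`, where `W(q, p) = q ∂_z p - p ∂_z q` is the
numerator of `f_λ'`. Near a parameter where `q(λ, w(λ)) ≠ 0` the multiplier `f_λ'(w(λ))` is
holomorphic of modulus one, hence a constant `α` by the maximum modulus principle, so `L` and `M`
vanish at `(λ, w(λ))` for infinitely many `λ`. Clearing denominators in a Bezout identity shows
that `L` and `M` cannot be coprime over `ℂ(λ)`. By Gauss's lemma they then share a factor of
positive `z`-degree in `ℂ[λ][z]`, which has a root `z` for every `λ` off the zeros of its leading
coefficient. Such a `z` is a fixed point of `f_λ` of multiplier `α`, unless `p(λ, ·)` and `q(λ, ·)`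
have a common root, which by coprimality of `p` and `q` happens for finitely many `λ` only.
-/

/-- The rational family `f_λ(z) = p(λ,z)/q(λ,z)` obtained by specializing `λ`. -/
noncomputable def Ffam (p q : Polynomial (Polynomial ℂ)) (l z : ℂ) : ℂ :=
  (p.map (Polynomial.evalRingHom l)).eval z / (q.map (Polynomial.evalRingHom l)).eval z

open Polynomial Filter Topology

namespace Polynomial

section FractionRing

variable {R K : Type*} [CommRing R] [IsDomain R] [Field K] [Algebra R K] [IsFractionRing R K]

lemma exists_map_algebraMap_eq_C_mul (a : K[X]) :
    ∃ A : R[X], ∃ c : R, c ≠ 0 ∧ A.map (algebraMap R K) = C (algebraMap R K c) * a := by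
  obtain ⟨c, hc, hA⟩ := IsLocalization.integerNormalization_spec (nonZeroDivisors R) a
  refine ⟨IsLocalization.integerNormalization (nonZeroDivisors R) a, c,
    nonZeroDivisors.ne_zero hc, ?_⟩
  rw [hA, ← IsScalarTower.algebraMap_smul K c a, smul_eq_C_mul]

lemma exists_natDegree_pos_dvd_dvd_of_not_isCoprime_map [NormalizedGCDMonoid R] {f g : R[X]}
    (h : ¬ IsCoprime (f.map (algebraMap R K)) (g.map (algebraMap R K))) :
    ∃ D : R[X], 0 < D.natDegree ∧ D ∣ f ∧ D ∣ g := by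
  classical
  have hinj := IsFractionRing.injective R K
  set d := EuclideanDomain.gcd (f.map (algebraMap R K)) (g.map (algebraMap R K))
  by_cases hd : d = 0
  · obtain ⟨hf, hg⟩ := EuclideanDomain.gcd_eq_zero_iff.mp hd
    rw [Polynomial.map_eq_zero_iff hinj] at hf hg
    exact ⟨X, by simp, by simp [hf], by simp [hg]⟩
  obtain ⟨P, c, hc, hP⟩ := exists_map_algebraMap_eq_C_mul (R := R) d
  have hc' : algebraMap R K c ≠ 0 := (map_ne_zero_iff _ hinj).mpr hc
  have hdvd {u : R[X]} (hu : d ∣ u.map (algebraMap R K)) : P.primPart ∣ u := by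
    refine (isPrimitive_primPart P).dvd_of_fraction_map_dvd_fraction_map (K := K) ?_
    exact (map_dvd _ (primPart_dvd P)).trans (hP ▸ (C_mul_dvd hc').mpr hu)
  refine ⟨P.primPart, ?_, hdvd (EuclideanDomain.gcd_dvd_left _ _),
    hdvd (EuclideanDomain.gcd_dvd_right _ _)⟩
  have hd_pos : 0 < d.natDegree := natDegree_pos_iff_degree_pos.mpr <|
    degree_pos_of_ne_zero_of_nonunit hd (mt EuclideanDomain.gcd_isUnit_iff.mp h)
  rwa [natDegree_primPart, ← natDegree_map_eq_of_injective hinj, hP, natDegree_C_mul hc']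

end FractionRing

section Bivariate

variable {k K : Type*} [Field k] [Field K] [Algebra k[X] K] [IsFractionRing k[X] K]

lemma finite_setOf_exists_evalEval_eq_zero_of_isCoprime_map {f g : k[X][X]}
    (h : IsCoprime (f.map (algebraMap k[X] K)) (g.map (algebraMap k[X] K))) :
    {x : k | ∃ y, f.evalEval x y = 0 ∧ g.evalEval x y = 0}.Finite := by
  obtain ⟨a, b, hab⟩ := h
  obtain ⟨A, ca, hca, hA⟩ := exists_map_algebraMap_eq_C_mul (R := k[X]) a
  obtain ⟨B, cb, hcb, hB⟩ := exists_map_algebraMap_eq_C_mul (R := k[X]) b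
  have hbezout : C cb * A * f + C ca * B * g = C (ca * cb) := by
    apply map_injective _ (IsFractionRing.injective k[X] K)
    simp only [Polynomial.map_add, Polynomial.map_mul, map_C, hA, hB, map_mul]
    linear_combination (C (algebraMap k[X] K ca) * C (algebraMap k[X] K cb)) * hab
  refine (finite_setOfPred_isRoot (mul_ne_zero hca hcb)).subset fun x ⟨y, hf, hg⟩ => ?_
  simpa [hf, hg, evalEval_C] using (congrArg (evalEval x y) hbezout).symm

lemma finite_setOf_forall_evalEval_ne_zero [IsAlgClosed k] {D : k[X][X]} (hD : 0 < D.natDegree) :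
    {x : k | ∀ y, D.evalEval x y ≠ 0}.Finite := by
  refine (finite_setOfPred_isRoot (leadingCoeff_ne_zero.mpr (ne_zero_of_natDegree_gt hD))).subset
    fun x hx => ?_
  by_contra hlc
  replace hlc : eval x D.leadingCoeff ≠ 0 := hlc
  have hdeg : 0 < (D.map (evalRingHom x)).degree := by
    rwa [degree_map_eq_of_leadingCoeff_ne_zero _ hlc, ← natDegree_pos_iff_degree_pos]
  obtain ⟨y, hy⟩ := IsAlgClosed.exists_root _ hdeg.ne'
  exact hx y (by rwa [IsRoot, map_evalRingHom_eval] at hy)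

lemma finite_setOf_not_exists_evalEval_eq_zero_of_not_isCoprime_map [IsAlgClosed k]
    {f g : k[X][X]}
    (h : ¬ IsCoprime (f.map (algebraMap k[X] K)) (g.map (algebraMap k[X] K))) :
    {x : k | ¬ ∃ y, f.evalEval x y = 0 ∧ g.evalEval x y = 0}.Finite := by
  classical
  obtain ⟨D, hD, hDf, hDg⟩ := exists_natDegree_pos_dvd_dvd_of_not_isCoprime_map h
  refine (finite_setOf_forall_evalEval_ne_zero hD).subset fun x hx y hy => hx ⟨y, ?_, ?_⟩
  · exact zero_dvd_iff.mp (hy ▸ evalEval_dvd x y hDf)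
  · exact zero_dvd_iff.mp (hy ▸ evalEval_dvd x y hDg)

end Bivariate

section Analytic

variable {𝕜 : Type*} [NontriviallyNormedField 𝕜]

lemma differentiableOn_evalEval (r : 𝕜[X][X]) {v : 𝕜 → 𝕜} {s : Set 𝕜}
    (hv : DifferentiableOn 𝕜 v s) : DifferentiableOn 𝕜 (fun x => r.evalEval x (v x)) s := by
  induction r using Polynomial.induction_on' with
  | add r₁ r₂ h₁ h₂ => simpa only [evalEval_add] using h₁.fun_add h₂
  | monomial n a =>
    simpa [evalEval, eval_monomial] using a.differentiableOn.fun_mul (hv.fun_pow n)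

/-- At a pole the quotient is discontinuous, so Lean's `deriv` takes its junk value `0`. -/
lemma deriv_eval_div_eval_of_isRoot {P Q : 𝕜[X]} {z : 𝕜} (hQ : Q.IsRoot z) (hP : ¬ P.IsRoot z) :
    deriv (fun x => P.eval x / Q.eval x) z = 0 := by
  by_cases hQ0 : Q = 0
  · simp [hQ0]
  refine deriv_zero_of_not_differentiableAt fun hd => hP ?_
  have hQne : ∀ᶠ x in 𝓝[≠] z, Q.eval x ≠ 0 :=
    nhdsNE_le_cofinite z (finite_setOfPred_isRoot hQ0).eventually_cofinite_notMem
  have hlim : Tendsto (fun x => P.eval x / Q.eval x * Q.eval x) (𝓝[≠] z) (𝓝 0) := by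
    simpa [hQ.eq_zero] using
      ((hd.continuousAt.fun_mul Q.continuousAt).tendsto).mono_left nhdsWithin_le_nhds
  exact tendsto_nhds_unique (P.continuousAt.tendsto.mono_left (nhdsWithin_le_nhds (s := {z}ᶜ)))
    (hlim.congr' (hQne.mono fun x hx => div_mul_cancel₀ _ hx))

lemma deriv_eval_div_eval {P Q : 𝕜[X]} {z : 𝕜} (hQ : Q.eval z ≠ 0) :
    deriv (fun x => P.eval x / Q.eval x) z = (wronskian Q P).eval z / Q.eval z ^ 2 := by
  rw [deriv_fun_div P.differentiableAt Q.differentiableAt hQ, Polynomial.deriv, Polynomial.deriv,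
    wronskian, eval_sub, eval_mul, eval_mul]
  ring

end Analytic

end Polynomial

lemma Ffam_apply (p q : ℂ[X][X]) (l z : ℂ) : Ffam p q l z = p.evalEval l z / q.evalEval l z := by
  simp only [Ffam, map_evalRingHom_eval]

lemma Ffam_eq_self_iff {p q : ℂ[X][X]} {l z : ℂ} (hq : q.evalEval l z ≠ 0) :
    Ffam p q l z = z ↔ (p - X * q).evalEval l z = 0 := by
  rw [Ffam_apply, div_eq_iff hq, evalEval_sub, evalEval_mul, evalEval_X, sub_eq_zero]

lemma deriv_Ffam {p q : ℂ[X][X]} {l z : ℂ} (hq : q.evalEval l z ≠ 0) :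
    deriv (Ffam p q l) z = (wronskian q p).evalEval l z / q.evalEval l z ^ 2 := by
  rw [← map_evalRingHom_eval] at hq
  have h := deriv_eval_div_eval (P := p.map (evalRingHom l)) hq
  rw [wronskian, derivative_map, derivative_map, ← Polynomial.map_mul, ← Polynomial.map_mul,
    ← Polynomial.map_sub] at h
  simp only [map_evalRingHom_eval] at h
  rwa [funext (Ffam_apply p q l), wronskian]

lemma deriv_Ffam_eq_iff {p q : ℂ[X][X]} {l z α : ℂ} (hq : q.evalEval l z ≠ 0) :
    deriv (Ffam p q l) z = α ↔ (wronskian q p - CC α * q ^ 2).evalEval l z = 0 := by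
  rw [deriv_Ffam hq, div_eq_iff (pow_ne_zero 2 hq), evalEval_sub, evalEval_mul, evalEval_CC,
    evalEval_pow, sub_eq_zero]

lemma evalEval_ne_zero_of_deriv_Ffam_ne_zero {p q : ℂ[X][X]} {l z : ℂ}
    (hd : deriv (Ffam p q l) z ≠ 0) (hpq : ¬ (p.evalEval l z = 0 ∧ q.evalEval l z = 0)) :
    q.evalEval l z ≠ 0 := fun hq =>
  hd <| deriv_eval_div_eval_of_isRoot (by rwa [IsRoot, map_evalRingHom_eval])
    fun hp => hpq ⟨by rwa [IsRoot, map_evalRingHom_eval] at hp, hq⟩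

lemma differentiableOn_deriv_Ffam {p q : ℂ[X][X]} {w : ℂ → ℂ} {s : Set ℂ}
    (hw : DifferentiableOn ℂ w s) (hq : ∀ l ∈ s, q.evalEval l (w l) ≠ 0) :
    DifferentiableOn ℂ (fun l => deriv (Ffam p q l) (w l)) s := by
  refine DifferentiableOn.congr ?_ fun l hl => deriv_Ffam (hq l hl)
  exact (differentiableOn_evalEval _ hw).div ((differentiableOn_evalEval _ hw).pow 2)
    fun l hl => pow_ne_zero 2 (hq l hl)

/-- If a holomorphic family of rational maps `f_λ = p(λ,·)/q(λ,·)`, with `p, q` coprime in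
`ℂ(λ)[z]`, has a persistently indifferent fixed point over a neighborhood `U` of some `λ₀`,
then for all but finitely many `λ ∈ ℂ` the map `f_λ` has an indifferent fixed point. -/
theorem persistently_indifferent_spreads (p q : Polynomial (Polynomial ℂ))
    (hcop : IsCoprime (p.map (algebraMap (Polynomial ℂ) (RatFunc ℂ)))
        (q.map (algebraMap (Polynomial ℂ) (RatFunc ℂ))))
    (U : Set ℂ) (hUopen : IsOpen U) (lam₀ : ℂ) (hlam₀ : lam₀ ∈ U)
    (w : ℂ → ℂ) (hw : DifferentiableOn ℂ w U)
    (hfix : ∀ l ∈ U, Ffam p q l (w l) = w l)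
    (hmult : ∀ l ∈ U, ‖deriv (Ffam p q l) (w l)‖ = 1) :
    {l : ℂ | ¬ ∃ z : ℂ, Ffam p q l z = z ∧
        ‖deriv (Ffam p q l) z‖ = 1}.Finite := by
  set E := {l : ℂ | ∃ z, p.evalEval l z = 0 ∧ q.evalEval l z = 0}
  have hE : E.Finite := finite_setOf_exists_evalEval_eq_zero_of_isCoprime_map hcop
  obtain ⟨l₁, hl₁⟩ := ((infinite_of_mem_nhds lam₀ (hUopen.mem_nhds hlam₀)).sdiff hE).nonempty
  obtain ⟨r, hr, hball⟩ := Metric.isOpen_iff.mp (hUopen.sdiff hE.isClosed) l₁ hl₁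
  have hq (l) (hl : l ∈ Metric.ball l₁ r) : q.evalEval l (w l) ≠ 0 :=
    evalEval_ne_zero_of_deriv_Ffam_ne_zero (norm_ne_zero_iff.mp <| by simp [hmult l (hball hl).1])
      fun h => (hball hl).2 ⟨w l, h⟩
  have hconst := Complex.eqOn_of_isPreconnected_of_isMaxOn_norm (convex_ball l₁ r).isPreconnected
    Metric.isOpen_ball (differentiableOn_deriv_Ffam (p := p) (hw.mono fun l hl => (hball hl).1) hq)
    (Metric.mem_ball_self hr) fun l hl => (hmult l (hball hl).1).trans (hmult l₁ hl₁.1).symm |>.le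
  set α := deriv (Ffam p q l₁) (w l₁)
  have hLM : ¬ IsCoprime ((p - X * q).map (algebraMap ℂ[X] (RatFunc ℂ)))
      ((wronskian q p - CC α * q ^ 2).map (algebraMap ℂ[X] (RatFunc ℂ))) := fun h =>
    infinite_of_mem_nhds l₁ (Metric.ball_mem_nhds l₁ hr) <|
      (finite_setOf_exists_evalEval_eq_zero_of_isCoprime_map h).subset fun l hl =>
        ⟨w l, (Ffam_eq_self_iff (hq l hl)).mp (hfix l (hball hl).1),
          (deriv_Ffam_eq_iff (hq l hl)).mp (hconst hl)⟩
  refine ((finite_setOf_not_exists_evalEval_eq_zero_of_not_isCoprime_map hLM).union hE).subset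
    fun l hl => by_contra fun hl' => ?_
  obtain ⟨hLMl, hlE⟩ := not_or.mp hl'
  obtain ⟨z, hL, hM⟩ := not_not.mp hLMl
  have hqz : q.evalEval l z ≠ 0 := fun hq0 => hlE ⟨z, by simpa [hq0] using hL, hq0⟩
  exact hl ⟨z, (Ffam_eq_self_iff hqz).mpr hL, by rw [(deriv_Ffam_eq_iff hqz).mpr hM, hmult l₁ hl₁.1]⟩
end

section
/- Let Δ ≥ 3 and define U_Δ = { −α·(Δ−1)^{Δ−1}/(Δ−1+α)^Δ : |α| < 1 } ⊆ ℂ. Then the open disc of radius (Δ−1)^{Δ−1}/Δ^Δ centered at 0 is contained in U_Δ. -/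
/-!
`φ(α) = −α·(Δ−1)^{Δ−1}/(Δ−1+α)^Δ` is holomorphic on a neighbourhood of the closed unit disc,
vanishes at `0`, and satisfies `|φ| ≥ (Δ−1)^{Δ−1}/Δ^Δ` on the unit circle because
`|Δ−1+α| ≤ Δ` there. By the open mapping theorem the image of the open disc is open; the image
of the closed disc is compact, and inside the disc of radius `(Δ−1)^{Δ−1}/Δ^Δ` it agrees with
the image of the open disc. Connectedness of that disc then puts all of it in the image.
-/

open Set Metric

/-- The region `U_Δ`, the image of the open unit disc under
`α ↦ −α·(Δ−1)^{Δ−1}/(Δ−1+α)^Δ`. -/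
def Uregion (Δ : ℕ) : Set ℂ :=
  {w : ℂ | ∃ α : ℂ, ‖α‖ < 1 ∧
    w = -α * ((Δ : ℂ) - 1) ^ (Δ - 1) / ((Δ : ℂ) - 1 + α) ^ Δ}

/-- A sharp form of `DiffContOnCl.ball_subset_image_closedBall`. -/
theorem DiffContOnCl.ball_subset_image_ball_of_le_norm_sub {f : ℂ → ℂ} {c : ℂ} {r m : ℝ}
    (hf : DiffContOnCl ℂ f (ball c r)) (hr : 0 < r)
    (hm : ∀ z ∈ sphere c r, m ≤ ‖f z - f c‖) :
    ball (f c) m ⊆ f '' ball c r := by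
  rcases le_or_gt m 0 with hm0 | hm0
  · simp [ball_eq_empty.mpr hm0]
  have hcl : closure (ball c r) = closedBall c r := closure_ball c hr.ne'
  have hcont : ContinuousOn f (closedBall c r) := hcl ▸ hf.continuousOn
  have hopen : IsOpen (f '' ball c r) := by
    rcases (hf.differentiableOn.analyticOnNhd isOpen_ball).is_constant_or_isOpen
      (convex_ball c r).isPreconnected with ⟨w, hw⟩ | hopen
    · obtain ⟨z, hz⟩ := (NormedSpace.sphere_nonempty (x := c)).mpr hr.le
      have hconst : EqOn f (fun _ ↦ w) (closedBall c r) :=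
        EqOn.of_subset_closure hw hcont continuousOn_const ball_subset_closedBall hcl.ge
      have := hm z hz
      rw [hconst (sphere_subset_closedBall hz), hconst (mem_closedBall_self hr.le), sub_self,
        norm_zero] at this
      linarith
    · exact hopen _ subset_rfl isOpen_ball
  have hclosed : IsClosed (f '' closedBall c r) :=
    ((isCompact_closedBall c r).image_of_continuousOn hcont).isClosed
  refine (convex_ball _ _).isPreconnected.subset_left_of_subset_union hopen hclosed.isOpen_compl
    (disjoint_compl_right_iff_subset.mpr (image_mono ball_subset_closedBall)) ?_
    ⟨f c, mem_ball_self hm0, c, mem_ball_self hr, rfl⟩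
  rintro v hv
  refine or_iff_not_imp_right.mpr fun hvK ↦ ?_
  obtain ⟨z, hz, rfl⟩ := not_not.mp hvK
  rw [← ball_union_sphere] at hz
  exact mem_image_of_mem f (hz.resolve_right fun hzs ↦ (hm z hzs).not_gt (mem_ball_iff_norm.mp hv))

noncomputable def uMap (Δ : ℕ) (α : ℂ) : ℂ :=
  -α * ((Δ : ℂ) - 1) ^ (Δ - 1) / ((Δ : ℂ) - 1 + α) ^ Δ

theorem Uregion_eq_image_ball (Δ : ℕ) : Uregion Δ = uMap Δ '' ball 0 1 := by
  ext w
  simp only [Uregion, uMap, mem_ofPred_eq, mem_image, mem_ball_zero_iff, eq_comm]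

theorem uMap_zero (Δ : ℕ) : uMap Δ 0 = 0 := by
  simp [uMap]

theorem norm_natCast_sub_one {Δ : ℕ} (hΔ : 1 ≤ Δ) : ‖(Δ : ℂ) - 1‖ = (Δ : ℝ) - 1 := by
  rw [← Nat.cast_one, ← Nat.cast_sub hΔ, Complex.norm_natCast, Nat.cast_sub hΔ, Nat.cast_one]

theorem natCast_sub_one_add_ne_zero {Δ : ℕ} (hΔ : 3 ≤ Δ) {α : ℂ} (hα : ‖α‖ ≤ 1) :
    (Δ : ℂ) - 1 + α ≠ 0 := by
  refine ne_zero_of_norm_ne_zero (ne_of_gt ?_)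
  have hΔR : (3 : ℝ) ≤ Δ := by exact_mod_cast hΔ
  calc 0 < ((Δ : ℝ) - 1) - ‖α‖ := by linarith
    _ = ‖(Δ : ℂ) - 1‖ - ‖-α‖ := by rw [norm_natCast_sub_one (by omega), norm_neg]
    _ ≤ ‖(Δ : ℂ) - 1 + α‖ := by simpa using norm_sub_norm_le ((Δ : ℂ) - 1) (-α)

theorem diffContOnCl_uMap {Δ : ℕ} (hΔ : 3 ≤ Δ) : DiffContOnCl ℂ (uMap Δ) (ball 0 1) := by
  refine DifferentiableOn.diffContOnCl fun α hα ↦ ?_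
  rw [closure_ball 0 one_ne_zero, mem_closedBall_zero_iff] at hα
  unfold uMap
  fun_prop (disch := exact pow_ne_zero _ (natCast_sub_one_add_ne_zero hΔ hα))

theorem le_norm_uMap_of_mem_sphere {Δ : ℕ} (hΔ : 3 ≤ Δ) {α : ℂ} (hα : α ∈ sphere 0 1) :
    ((Δ : ℝ) - 1) ^ (Δ - 1) / (Δ : ℝ) ^ Δ ≤ ‖uMap Δ α‖ := by
  rw [mem_sphere_zero_iff_norm] at hα
  have hΔR : (3 : ℝ) ≤ Δ := by exact_mod_cast hΔ
  have hden : ‖(Δ : ℂ) - 1 + α‖ ≤ Δ := by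
    simpa [norm_natCast_sub_one (by omega : 1 ≤ Δ), hα] using norm_add_le ((Δ : ℂ) - 1) α
  rw [uMap, norm_div, norm_mul, norm_neg, hα, one_mul, norm_pow, norm_pow,
    norm_natCast_sub_one (by omega)]
  exact div_le_div_of_nonneg_left (pow_nonneg (by linarith) _)
    (pow_pos (norm_pos_iff.mpr (natCast_sub_one_add_ne_zero hΔ hα.le)) _)
    (pow_le_pow_left₀ (norm_nonneg _) hden _)

/-- The open disc of radius `(Δ−1)^{Δ−1}/Δ^Δ` centered at `0` is contained in `U_Δ`. -/
theorem disc_subset_U (Δ : ℕ) (hΔ : 3 ≤ Δ) (w : ℂ)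
    (hw : ‖w‖ < ((Δ : ℝ) - 1) ^ (Δ - 1) / (Δ : ℝ) ^ Δ) :
    w ∈ Uregion Δ := by
  have hsub : ball (uMap Δ 0) (((Δ : ℝ) - 1) ^ (Δ - 1) / (Δ : ℝ) ^ Δ) ⊆ uMap Δ '' ball 0 1 :=
    (diffContOnCl_uMap hΔ).ball_subset_image_ball_of_le_norm_sub one_pos fun α hα ↦ by
      simpa [uMap_zero] using le_norm_uMap_of_mem_sphere hΔ hα
  rw [Uregion_eq_image_ball]
  exact hsub (by simpa [uMap_zero] using hw)
end
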